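/- arXiv:1511.00876 — 5 statements merged into one kernel-verified Lean document; each statement's English description precedes it below -/
import Mathlib

section
/- Counter invariant for the marks 𝓝 and 𝓡 (arithmetic core of the paper's Lemma 1): let α be a real number with 0 < α < 1/3, let n be a natural number, let r = ⌊α·n⌋, and let x be the least natural number such that ⌊α·(n + 2x + 1)⌋ > r. Then α·(2x + 1) < 2, hence x ≤ 1/α, and ⌊α·(n + 2x + 1)⌋ = r + 1. -/
/-- Counter invariant for the marks 𝓝 and 𝓡: if `0 < α < 1/3`, `r = ⌊α·n⌋`, and `x`
is the least natural number with `⌊α·(n + 2x + 1)⌋ > r`, then `α·(2x+1) < 2`, hence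
`x ≤ 1/α`, and `⌊α·(n + 2x + 1)⌋ = r + 1`. -/
theorem mark_N_R_counter_invariant (α : ℝ) (hα0 : 0 < α) (hα : α < 1/3)
    (n r x : ℕ) (hr : (r : ℤ) = ⌊α * (n : ℝ)⌋)
    (hx : IsLeast {x : ℕ | (r : ℤ) < ⌊α * ((n : ℝ) + 2 * (x : ℝ) + 1)⌋} x) :
    α * (2 * (x : ℝ) + 1) < 2 ∧ (x : ℝ) ≤ 1 / α ∧
      ⌊α * ((n : ℝ) + 2 * (x : ℝ) + 1)⌋ = (r : ℤ) + 1 := by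
  obtain ⟨hmem, hmin⟩ := hx
  have hfl : (r : ℝ) ≤ α * n := by
    have h := Int.floor_le (α * (n : ℝ))
    rw [← hr] at h
    exact_mod_cast h
  have hfu : α * n < (r : ℝ) + 1 := by
    have h := Int.lt_floor_add_one (α * (n : ℝ))
    rw [← hr] at h
    exact_mod_cast h
  have key : α * (2 * (x : ℝ) + 1) < 2 ∧ α * ((n : ℝ) + 2 * x + 1) < (r : ℝ) + 2 := by
    rcases Nat.eq_zero_or_pos x with h0 | hpos
    · subst h0
      refine ⟨by norm_num; linarith, ?_⟩
      push_cast
      nlinarith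
    · have hnot : (x - 1 : ℕ) ∉ {y : ℕ | (r : ℤ) < ⌊α * ((n : ℝ) + 2 * (y : ℝ) + 1)⌋} := by
        intro h
        have := hmin h
        omega
      simp only [Set.mem_setOf_eq, not_lt] at hnot
      have hlt : α * ((n : ℝ) + 2 * ((x : ℝ) - 1) + 1) < (r : ℝ) + 1 := by
        have h := Int.lt_floor_add_one (α * ((n : ℝ) + 2 * ((x - 1 : ℕ) : ℝ) + 1))
        have hc : ((x - 1 : ℕ) : ℝ) = (x : ℝ) - 1 := by
          have : (1 : ℕ) ≤ x := hpos
          push_cast [Nat.cast_sub this]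
          ring
        rw [hc] at h
        have h2 : (⌊α * ((n : ℝ) + 2 * ((x : ℝ) - 1) + 1)⌋ : ℝ) ≤ (r : ℝ) := by
          rw [hc] at hnot
          exact_mod_cast hnot
        linarith
      -- α * (2x - 1) < 1
      have h1 : α * (2 * (x : ℝ) - 1) < 1 := by nlinarith
      constructor
      · nlinarith
      · nlinarith
  have hhalf : α < 1/2 := by linarith
  refine ⟨key.1, ?_, ?_⟩
  · rw [le_div_iff₀ hα0]
    nlinarith [key.1]
  · have hge : (r : ℤ) + 1 ≤ ⌊α * ((n : ℝ) + 2 * (x : ℝ) + 1)⌋ := hmem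
    have hlt : ⌊α * ((n : ℝ) + 2 * (x : ℝ) + 1)⌋ < (r : ℤ) + 2 := by
      rw [Int.floor_lt]
      push_cast
      linarith [key.2]
    omega
end

section
/- Combined dual-feasibility certificate for the case s(𝔯) > 1/3 (the verification theorem behind Table 3): let Q ≥ 2, let α be a real with 0 ≤ α < 1, set a = (1−α)/(1+α) and b = (1−α)/2, let w, v : {1,…,Q} → ℝ with w(1) = v(1) = w(2) = v(2) = W for some real W, let m, c : {1,…,Q} → ℝ with m(i) ≥ 0, c(i) ≥ 0 for all i and m(2) = 1, and let γ be a real with 0 ≤ γ ≤ W. Suppose there exists y₃ ∈ [0,1] such that for every i with 3 ≤ i ≤ Q: (1−y₃)·w(i) + y₃·v(i) + a·m(i)·(W−γ) + c(i)·(2/(1−α))·(1+a)·(W−γ) ≤ γ. Then every χ : {1,…,Q} → ℝ with χ(i) ≥ 0 for all i, ∑_{i=1}^{Q} χ(i) ≤ 1, χ(1) ≤ a·∑_{i=2}^{Q} χ(i)·m(i), and b·χ(2) ≤ ∑_{i=3}^{Q} χ(i)·c(i), satisfies min( ∑_{i=1}^{Q} χ(i)·w(i), ∑_{i=1}^{Q}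 χ(i)·v(i) ) ≤ γ. -/
set_option maxHeartbeats 1000000

lemma split_sum_two (Q : ℕ) (hQ : 2 ≤ Q) (f : ℕ → ℝ) :
    ∑ i ∈ Finset.Icc 1 Q, f i = f 1 + f 2 + ∑ i ∈ Finset.Icc 3 Q, f i := by
  have h : Finset.Icc 1 Q = insert 1 (insert 2 (Finset.Icc 3 Q)) := by
    ext i; simp only [Finset.mem_Icc, Finset.mem_insert]; omega
  rw [h, Finset.sum_insert, Finset.sum_insert]
  · ring
  · simp [Finset.mem_Icc]
  · simp [Finset.mem_Icc]

lemma split_sum_one (Q : ℕ) (hQ : 2 ≤ Q) (f : ℕ → ℝ) :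
    ∑ i ∈ Finset.Icc 2 Q, f i = f 2 + ∑ i ∈ Finset.Icc 3 Q, f i := by
  have h : Finset.Icc 2 Q = insert 2 (Finset.Icc 3 Q) := by
    ext i; simp only [Finset.mem_Icc, Finset.mem_insert]; omega
  rw [h, Finset.sum_insert]
  simp [Finset.mem_Icc]

/-- Combined dual-feasibility certificate for the case `s(𝔯) > 1/3`: if there is a
`y₃ ∈ [0,1]` such that the modified weight
`(1−y₃)·w(i) + y₃·v(i) + a·m(i)·(W−γ) + c(i)·(2/(1−α))·(1+a)·(W−γ)` of every pattern
`i ∈ {3,…,Q}` is at most `γ`, where `a = (1−α)/(1+α)`, then every feasible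
subdistribution `χ` over the patterns satisfies `min(∑ χ·w, ∑ χ·v) ≤ γ`. -/
theorem combined_dual_feasibility_certificate (Q : ℕ) (hQ : 2 ≤ Q)
    (α : ℝ) (hα0 : 0 ≤ α) (hα1 : α < 1)
    (w v m c : ℕ → ℝ) (W : ℝ)
    (hw1 : w 1 = W) (hv1 : v 1 = W) (hw2 : w 2 = W) (hv2 : v 2 = W)
    (hm : ∀ i ∈ Finset.Icc 1 Q, 0 ≤ m i) (hc : ∀ i ∈ Finset.Icc 1 Q, 0 ≤ c i)
    (hm2 : m 2 = 1)
    (γ : ℝ) (hγ0 : 0 ≤ γ) (hγW : γ ≤ W)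
    (hcert : ∃ y3 : ℝ, 0 ≤ y3 ∧ y3 ≤ 1 ∧ ∀ i ∈ Finset.Icc 3 Q,
      (1 - y3) * w i + y3 * v i
        + ((1 - α) / (1 + α)) * m i * (W - γ)
        + c i * (2 / (1 - α)) * (1 + (1 - α) / (1 + α)) * (W - γ) ≤ γ)
    (χ : ℕ → ℝ) (hχ : ∀ i ∈ Finset.Icc 1 Q, 0 ≤ χ i)
    (hsum : ∑ i ∈ Finset.Icc 1 Q, χ i ≤ 1)
    (hp1 : χ 1 ≤ ((1 - α) / (1 + α)) * ∑ i ∈ Finset.Icc 2 Q, χ i * m i)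
    (hp2 : ((1 - α) / 2) * χ 2 ≤ ∑ i ∈ Finset.Icc 3 Q, χ i * c i) :
    min (∑ i ∈ Finset.Icc 1 Q, χ i * w i) (∑ i ∈ Finset.Icc 1 Q, χ i * v i) ≤ γ := by
  obtain ⟨y3, hy0, hy1, hcert⟩ := hcert
  set a : ℝ := (1 - α) / (1 + α) with ha
  have hsub : Finset.Icc 3 Q ⊆ Finset.Icc 1 Q := by
    intro i hi; simp only [Finset.mem_Icc] at *; omega
  have hχ3 : ∀ i ∈ Finset.Icc 3 Q, 0 ≤ χ i := fun i hi => hχ i (hsub hi)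
  have hc3 : ∀ i ∈ Finset.Icc 3 Q, 0 ≤ c i := fun i hi => hc i (hsub hi)
  have hm3 : ∀ i ∈ Finset.Icc 3 Q, 0 ≤ m i := fun i hi => hm i (hsub hi)
  have hapos : 0 ≤ a := by
    apply div_nonneg <;> linarith
  have hWγ : 0 ≤ W - γ := by linarith
  -- abbreviations for the tail sums
  set s1 := ∑ i ∈ Finset.Icc 3 Q, χ i * w i with hs1
  set s2 := ∑ i ∈ Finset.Icc 3 Q, χ i * v i with hs2
  set sm := ∑ i ∈ Finset.Icc 3 Q, χ i * m i with hsm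
  set sc := ∑ i ∈ Finset.Icc 3 Q, χ i * c i with hsc
  set sχ := ∑ i ∈ Finset.Icc 3 Q, χ i with hsχ
  have key : (1 - y3) * s1 + y3 * s2 + a * (W - γ) * sm
      + (2 / (1 - α)) * (1 + a) * (W - γ) * sc ≤ γ * sχ := by
    have h := Finset.sum_le_sum (f := fun i => χ i *
        ((1 - y3) * w i + y3 * v i + a * m i * (W - γ)
          + c i * (2 / (1 - α)) * (1 + a) * (W - γ)))
      (g := fun i => χ i * γ)
      (fun i hi => mul_le_mul_of_nonneg_left (hcert i hi) (hχ3 i hi))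
    calc (1 - y3) * s1 + y3 * s2 + a * (W - γ) * sm
          + (2 / (1 - α)) * (1 + a) * (W - γ) * sc
        = ∑ i ∈ Finset.Icc 3 Q, χ i *
            ((1 - y3) * w i + y3 * v i + a * m i * (W - γ)
              + c i * (2 / (1 - α)) * (1 + a) * (W - γ)) := by
          rw [hs1, hs2, hsm, hsc, Finset.mul_sum, Finset.mul_sum, Finset.mul_sum,
            Finset.mul_sum, ← Finset.sum_add_distrib, ← Finset.sum_add_distrib,
            ← Finset.sum_add_distrib]
          exact Finset.sum_congr rfl (fun i _ => by ring)
      _ ≤ ∑ i ∈ Finset.Icc 3 Q, χ i * γ := h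
      _ = γ * sχ := by rw [hsχ, Finset.mul_sum]; exact Finset.sum_congr rfl (fun i _ => by ring)
  have hA : ∑ i ∈ Finset.Icc 1 Q, χ i * w i = χ 1 * W + χ 2 * W + s1 := by
    rw [split_sum_two Q hQ, hw1, hw2]
  have hB : ∑ i ∈ Finset.Icc 1 Q, χ i * v i = χ 1 * W + χ 2 * W + s2 := by
    rw [split_sum_two Q hQ, hv1, hv2]
  have hSum : χ 1 + χ 2 + sχ ≤ 1 := by
    rw [split_sum_two Q hQ] at hsum; exact hsum
  have hp1' : χ 1 ≤ a * (χ 2 + sm) := by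
    rw [split_sum_one Q hQ, hm2] at hp1; linarith [hp1]
  -- from hp2: (1+a)*(W-γ)*χ 2 ≤ (2/(1-α))*(1+a)*(W-γ)*sc
  have h2 : (1 + a) * (W - γ) * χ 2 ≤ (2 / (1 - α)) * (1 + a) * (W - γ) * sc := by
    have hK : 0 ≤ (2 / (1 - α)) * (1 + a) * (W - γ) := by
      apply mul_nonneg (mul_nonneg _ _) hWγ
      · apply div_nonneg <;> linarith
      · linarith
    have := mul_le_mul_of_nonneg_left hp2 hK
    have hne : (1 - α) ≠ 0 := by linarith
    calc (1 + a) * (W - γ) * χ 2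
        = (2 / (1 - α)) * (1 + a) * (W - γ) * (((1 - α) / 2) * χ 2) := by
          field_simp
      _ ≤ (2 / (1 - α)) * (1 + a) * (W - γ) * sc := this
  have h1 : (W - γ) * χ 1 ≤ (W - γ) * (a * (χ 2 + sm)) :=
    mul_le_mul_of_nonneg_left hp1' hWγ
  have hmin : min (∑ i ∈ Finset.Icc 1 Q, χ i * w i) (∑ i ∈ Finset.Icc 1 Q, χ i * v i)
      ≤ (1 - y3) * (∑ i ∈ Finset.Icc 1 Q, χ i * w i)
        + y3 * (∑ i ∈ Finset.Icc 1 Q, χ i * v i) := by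
    have h1' := min_le_left (∑ i ∈ Finset.Icc 1 Q, χ i * w i) (∑ i ∈ Finset.Icc 1 Q, χ i * v i)
    have h2' := min_le_right (∑ i ∈ Finset.Icc 1 Q, χ i * w i) (∑ i ∈ Finset.Icc 1 Q, χ i * v i)
    nlinarith [h1', h2']
  have hγsum : γ * (χ 1 + χ 2 + sχ) ≤ γ := by nlinarith [hSum, hγ0]
  rw [hA, hB] at hmin ⊢
  linarith [hmin, key, h1, h2, hγsum]
end

section
/- Lower bound computation for interval-classification algorithms, case redfit₄ = 2: for all real numbers α₂, α₃, α₄ with 0 ≤ α₂, α₃, α₄ ≤ 1/3, setting χ₁ = 2(1 − α₂ − α₂·α₃)/(1 + α₂) and χ₂ = 2α₃, the maximum of the four quantities W₁ = 31/28 + 2α₃ + (1 − α₄)/6 + α₄/2, W₂ = 1 + (1 − α₂)/2 + 1/6, W₃ = 1 + (1 − α₂)/2 + (1 − α₄)/6 + 1/42, and W₄ = ( (1 + α₂) + (1 − α₃)/3 + 1/12 + ((3 + α₂)/2)·(χ₁ + χ₂) ) / (1 + χ₁ + χ₂) is at least 1.5762. -/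
/-- Lower bound computation for interval-classification algorithms, case
`redfit₄ = 2`: for all red fractions `α₂, α₃, α₄ ∈ [0, 1/3]`, the maximum of the
four per-bin costs `W₁, W₂, W₃, W₄` of the adversarial inputs is at least `1.5762`. -/
theorem lower_bound_redfit4_eq_two (α₂ α₃ α₄ : ℝ)
    (h20 : 0 ≤ α₂) (h21 : α₂ ≤ 1/3)
    (h30 : 0 ≤ α₃) (h31 : α₃ ≤ 1/3)
    (h40 : 0 ≤ α₄) (h41 : α₄ ≤ 1/3) :
    (1.5762 : ℝ) ≤
      max (max (31/28 + 2*α₃ + (1 - α₄)/6 + α₄/2)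
               (1 + (1 - α₂)/2 + 1/6))
          (max (1 + (1 - α₂)/2 + (1 - α₄)/6 + 1/42)
               (((1 + α₂) + (1 - α₃)/3 + 1/12
                  + ((3 + α₂)/2) * (2*(1 - α₂ - α₂*α₃)/(1 + α₂) + 2*α₃))
                 / (1 + 2*(1 - α₂ - α₂*α₃)/(1 + α₂) + 2*α₃))) := by
  by_cases h1 : (1.5762 : ℝ) ≤ 31/28 + 2*α₃ + (1 - α₄)/6 + α₄/2
  · exact le_trans h1 (le_max_of_le_left (le_max_left _ _))
  by_cases h2 : (1.5762 : ℝ) ≤ 1 + (1 - α₂)/2 + 1/6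
  · exact le_trans h2 (le_max_of_le_left (le_max_right _ _))
  by_cases h3 : (1.5762 : ℝ) ≤ 1 + (1 - α₂)/2 + (1 - α₄)/6 + 1/42
  · exact le_trans h3 (le_max_of_le_right (le_max_left _ _))
  push_neg at h1 h2 h3
  refine le_trans ?_ (le_max_of_le_right (le_max_right _ _))
  have hp : (0:ℝ) < 1 + α₂ := by linarith
  set x : ℝ := 2*(1 - α₂ - α₂*α₃)/(1 + α₂) with hxdef
  have hx : x * (1 + α₂) = 2*(1 - α₂ - α₂*α₃) := by
    rw [hxdef]; field_simp
  have hx0 : 0 ≤ x := by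
    apply div_nonneg _ (le_of_lt hp); nlinarith
  have hD : (0:ℝ) < 1 + x + 2*α₃ := by linarith
  rw [le_div_iff₀ hD]
  nlinarith [hx, mul_pos hp hD, sq_nonneg (α₂ - 11/60), sq_nonneg (α₃ - 1/8),
    mul_nonneg h30 hx0, mul_nonneg h20 hx0, mul_nonneg h20 h30,
    sq_nonneg (x - 1), sq_nonneg α₂, sq_nonneg α₃]
end

section
/- Lower bound computation for interval-classification algorithms, case redfit₄ = 1: for all real numbers α₂, α₃ with 0 ≤ α₂, α₃ ≤ 1/3, setting χ₁ = 4(1 − α₂ − α₂·α₃)/(1 + α₂) and χ₂ = 4α₃, the maximum of the three quantities W₁ = 1 + (1 − α₂)/2 + (1 − α₃)/6 + 1/42, W₂ = 1 + 5α₃ + 1/7, and W₃ = ( (1 + α₂) + (1 − α₃)/3 + 1/21 + ((3 + α₂)/2)·(χ₁ + χ₂) ) / (1 + χ₁ + χ₂) is at least 1.5788. -/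
/-- Lower bound computation for interval-classification algorithms, case
`redfit₄ = 1`: for all red fractions `α₂, α₃ ∈ [0, 1/3]`, the maximum of the three
per-bin costs `W₁, W₂, W₃` of the adversarial inputs is at least `1.5788`. -/
theorem lower_bound_redfit4_eq_one (α₂ α₃ : ℝ)
    (h20 : 0 ≤ α₂) (h21 : α₂ ≤ 1/3)
    (h30 : 0 ≤ α₃) (h31 : α₃ ≤ 1/3) :
    (1.5788 : ℝ) ≤
      max (max (1 + (1 - α₂)/2 + (1 - α₃)/6 + 1/42)
               (1 + 5*α₃ + 1/7))
          (((1 + α₂) + (1 - α₃)/3 + 1/21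
             + ((3 + α₂)/2) * (4*(1 - α₂ - α₂*α₃)/(1 + α₂) + 4*α₃))
            / (1 + 4*(1 - α₂ - α₂*α₃)/(1 + α₂) + 4*α₃)) := by
  rcases le_or_gt (1.5788 : ℝ) (1 + (1 - α₂)/2 + (1 - α₃)/6 + 1/42) with h1 | h1
  · exact le_max_of_le_left (le_max_of_le_left h1)
  rcases le_or_gt (1.5788 : ℝ) (1 + 5*α₃ + 1/7) with h2 | h2
  · exact le_max_of_le_left (le_max_of_le_right h2)
  refine le_max_of_le_right ?_
  have ha : (0:ℝ) < 1 + α₂ := by linarith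
  have hnum : 0 ≤ 1 - α₂ - α₂*α₃ := by nlinarith
  have hD : (0:ℝ) < 1 + 4*(1 - α₂ - α₂*α₃)/(1 + α₂) + 4*α₃ := by positivity
  have hQ : (0:ℝ) < 5 - 3*α₂ + 4*α₃ := by linarith
  have eq : ((1 + α₂) + (1 - α₃)/3 + 1/21
             + ((3 + α₂)/2) * (4*(1 - α₂ - α₂*α₃)/(1 + α₂) + 4*α₃))
            / (1 + 4*(1 - α₂ - α₂*α₃)/(1 + α₂) + 4*α₃)
      = (((1 + α₂) + (1 - α₃)/3 + 1/21)*(1 + α₂) + 2*(3 + α₂)*(1 - α₂ + α₃))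
            / (5 - 3*α₂ + 4*α₃) := by
    rw [div_eq_div_iff (ne_of_gt hD) (ne_of_gt hQ)]
    field_simp
    ring
  rw [eq, le_div_iff₀ hQ]
  nlinarith [sq_nonneg (α₂ - 0.189), sq_nonneg (α₃ - 0.0875), sq_nonneg α₂, sq_nonneg α₃,
    mul_nonneg h20 h30, sq_nonneg (α₂ + α₃), sq_nonneg (α₂ - α₃),
    sq_nonneg (α₂ + 3*α₃ - 0.4515), sq_nonneg (α₂ - 3*α₃)]
end

section
/- Lower bound computation for interval-classification algorithms, case redfit₄ = 3: for all real numbers α₂, α₃ with 0 ≤ α₂, α₃ ≤ 1/3, the maximum of the two quantities W₁ = 1 + (1 − α₂)/2 + (1 − α₃)/6 + 1/42 and W₂ = (1 + α₂) + (1 + α₃)/3 + 1/21 is at least 1.5872. -/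
/-- Lower bound computation for interval-classification algorithms, case
`redfit₄ = 3`: for all red fractions `α₂, α₃ ∈ [0, 1/3]`, the maximum of the two
per-bin costs `W₁, W₂` of the adversarial inputs is at least `1.5872`. -/
theorem lower_bound_redfit4_eq_three (α₂ α₃ : ℝ)
    (h20 : 0 ≤ α₂) (h21 : α₂ ≤ 1/3)
    (h30 : 0 ≤ α₃) (h31 : α₃ ≤ 1/3) :
    (1.5872 : ℝ) ≤
      max (1 + (1 - α₂)/2 + (1 - α₃)/6 + 1/42)
          ((1 + α₂) + (1 + α₃)/3 + 1/21) := by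
  rcases le_total (1 + (1 - α₂)/2 + (1 - α₃)/6 + 1/42)
      ((1 + α₂) + (1 + α₃)/3 + 1/21) with h | h
  · rw [max_eq_right h]; norm_num at h ⊢; linarith
  · rw [max_eq_left h]; norm_num at h ⊢; linarith
end
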